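/- arXiv:0805.2081 — 3 statements merged into one kernel-verified Lean document; each statement's English description precedes it below -/
import Mathlib

section
/- Let n ≥ 1. If C is an n×n random real matrix whose diagonal entries are all fixed equal to 1 and whose off-diagonal entries are independent, each distributed according to a Borel probability measure on ℝ that is atomless off 0, then the probability of the event {det C = 1 and there exists a non-identity permutation σ of {1,…,n} with ∏_{i=1}^n C_{σ(i),i} ≠ 0} is 0. -/
/-!
Almost surely every diagonal entry is `1`. Fix the set `s` of off-diagonal positions at which
`C` is nonzero. Then `det C - 1` is a multiaffine polynomial in the entries indexed by `s`, in
which the monomial `∏ i, C (σ i) i` of each `σ ≠ 1` whose moved positions lie in `s` carries the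
coefficient `sign σ`: distinct permutations move distinct sets of positions, so no cancellation
occurs. A multiaffine polynomial with a nonzero coefficient vanishes with probability `0` on the
event that all its variables are nonzero: write it as `f₀ + x a * f₁` with `f₀, f₁` free of
`x a`; where `f₁ ≠ 0`, the coordinate `x a` must take the single value `-f₀ / f₁`, which has
probability `0` unless it is `0`, and the event `f₀ = f₁ = 0` is handled by induction on `s`.
There are only finitely many sets `s`.
-/

open MeasureTheory Finset Function

theorem MeasureTheory.Measure.pi_null_of_forall_update_null {ι : Type*} [Fintype ι]
    [DecidableEq ι] {X : ι → Type*} [∀ i, MeasurableSpace (X i)] {μ : ∀ i, Measure (X i)}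
    [∀ i, SigmaFinite (μ i)] {A : Set (∀ i, X i)} (hA : MeasurableSet A) (i : ι)
    (h : ∀ x, μ i (update x i ⁻¹' A) = 0) :
    Measure.pi μ A = 0 := by
  rcases A.eq_empty_or_nonempty with rfl | ⟨x, -⟩
  · exact measure_empty
  have hslice : (fun y => ∫⁻ t, A.indicator 1 (update y i t) ∂μ i) = 0 := by
    funext y
    rw [Pi.zero_apply, ← h y, ← lintegral_indicator_one (measurable_update y hA)]
    rfl
  rw [← lintegral_indicator_one hA, lintegral_eq_lmarginal_univ x,
    lmarginal_erase' _ (measurable_one.indicator hA) (mem_univ i), hslice]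
  simp [lmarginal]

theorem MeasureTheory.Measure.pi_pi_eq_map_curry {ι κ X : Type*} [Fintype ι] [Fintype κ]
    [MeasurableSpace X] (μ : ι → κ → Measure X) [∀ i j, IsProbabilityMeasure (μ i j)] :
    Measure.pi (fun i => Measure.pi fun j => μ i j) =
      (Measure.pi fun p : ι × κ => μ p.1 p.2).map (MeasurableEquiv.curry ι κ X) := by
  simpa only [Measure.infinitePi_eq_pi] using (Measure.infinitePi_map_curry μ).symm

section Multiaffine

variable {ι : Type*}

def multiaffineEval (s : Finset ι) (c : Finset ι → ℝ) (x : ι → ℝ) : ℝ :=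
  ∑ m ∈ s.powerset, c m * ∏ i ∈ m, x i

theorem measurable_multiaffineEval (s : Finset ι) (c : Finset ι → ℝ) :
    Measurable (multiaffineEval s c) := by
  unfold multiaffineEval
  fun_prop

variable [DecidableEq ι]

theorem multiaffineEval_insert {a : ι} {s : Finset ι} (ha : a ∉ s) (c : Finset ι → ℝ)
    (x : ι → ℝ) :
    multiaffineEval (insert a s) c x =
      multiaffineEval s c x + x a * multiaffineEval s (fun m => c (insert a m)) x := by
  rw [multiaffineEval, sum_powerset_insert ha, multiaffineEval, multiaffineEval, mul_sum]
  congr 1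
  refine sum_congr rfl fun m hm => ?_
  rw [prod_insert fun h => ha (mem_powerset.1 hm h)]
  ring

theorem multiaffineEval_update_of_notMem {a : ι} {s : Finset ι} (ha : a ∉ s)
    (c : Finset ι → ℝ) (x : ι → ℝ) (t : ℝ) :
    multiaffineEval s c (update x a t) = multiaffineEval s c x := by
  refine sum_congr rfl fun m hm => congrArg _ <| prod_congr rfl fun i hi => update_of_ne ?_ _ _
  rintro rfl
  exact ha (mem_powerset.1 hm hi)

variable [Fintype ι] {μ : ι → Measure ℝ} [∀ i, SigmaFinite (μ i)]

theorem pi_multiaffineEval_eq_zero_null {s : Finset ι} (hμ : ∀ i ∈ s, ∀ t ≠ 0, μ i {t} = 0)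
    {c : Finset ι → ℝ} (hc : ∃ m ⊆ s, c m ≠ 0) :
    Measure.pi μ {x | multiaffineEval s c x = 0 ∧ ∀ i ∈ s, x i ≠ 0} = 0 := by
  induction s using Finset.induction_on generalizing c with
  | empty =>
    obtain ⟨m, hm, hcm⟩ := hc
    rw [subset_empty.1 hm] at hcm
    convert measure_empty (μ := Measure.pi μ)
    ext x
    simp [multiaffineEval, hcm]
  | insert a t ha ih =>
    set f₀ := multiaffineEval t c
    set f₁ := multiaffineEval t fun m => c (insert a m)
    have hμt : ∀ i ∈ t, ∀ x ≠ 0, μ i {x} = 0 := fun i hi => hμ i (mem_insert_of_mem hi)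
    have h_both : Measure.pi μ {x | f₀ x = 0 ∧ f₁ x = 0 ∧ ∀ i ∈ t, x i ≠ 0} = 0 := by
      obtain ⟨m, hm, hcm⟩ := hc
      rw [← mem_powerset, powerset_insert, mem_union, mem_image] at hm
      rcases hm with hm | ⟨m, hm, rfl⟩
      · exact measure_mono_null (by exact fun x hx => ⟨hx.1, hx.2.2⟩)
          (ih hμt ⟨m, mem_powerset.1 hm, hcm⟩)
      · exact measure_mono_null (by exact fun x hx => ⟨hx.2.1, hx.2.2⟩)
          (ih (c := fun m => c (insert a m)) hμt ⟨m, mem_powerset.1 hm, hcm⟩)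
    have h_slice : Measure.pi μ {x | f₁ x ≠ 0 ∧ f₀ x + x a * f₁ x = 0 ∧ x a ≠ 0} = 0 := by
      have hf₀ := measurable_multiaffineEval t c
      have hf₁ := measurable_multiaffineEval t fun m => c (insert a m)
      refine Measure.pi_null_of_forall_update_null ?_ a fun y => ?_
      · exact (hf₁ (measurableSet_singleton 0)).compl.inter
          (((hf₀.add ((measurable_pi_apply a).mul hf₁)) (measurableSet_singleton 0)).inter
            ((measurable_pi_apply a) (measurableSet_singleton 0)).compl)
      refine measure_mono_null (t := {-f₀ y / f₁ y} \ {0}) ?_ ?_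
      · rintro r ⟨h₁, h₂, h₃⟩
        simp only [f₀, f₁, multiaffineEval_update_of_notMem ha, update_self] at h₁ h₂ h₃
        refine ⟨?_, h₃⟩
        rw [Set.mem_singleton_iff, eq_div_iff h₁]
        linarith
      · by_cases hr : -f₀ y / f₁ y = 0
        · simp [hr]
        · exact measure_mono_null Set.sdiff_subset (hμ a (mem_insert_self a t) _ hr)
    refine measure_mono_null (fun x ⟨hx, hnz⟩ => ?_) (measure_union_null h_both h_slice)
    replace hx : f₀ x + x a * f₁ x = 0 := by rwa [multiaffineEval_insert ha] at hx
    by_cases h₁ : f₁ x = 0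
    · exact Or.inl ⟨by simpa [h₁] using hx, h₁, fun i hi => hnz i (mem_insert_of_mem hi)⟩
    · exact Or.inr ⟨h₁, hx, hnz a (mem_insert_self a t)⟩

end Multiaffine

namespace Equiv.Perm

variable {n : Type*} [Fintype n] [DecidableEq n]

def offDiagGraph (σ : Perm n) : Finset (n × n) :=
  σ.support.image fun i => (σ i, i)

theorem mem_offDiagGraph {σ : Perm n} {e : n × n} :
    e ∈ σ.offDiagGraph ↔ σ e.2 = e.1 ∧ e.1 ≠ e.2 := by
  obtain ⟨i, j⟩ := e
  simp only [offDiagGraph, mem_image, mem_support, Prod.mk.injEq]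
  constructor
  · rintro ⟨k, hk, rfl, rfl⟩
    exact ⟨rfl, hk⟩
  · rintro ⟨rfl, h⟩
    exact ⟨j, h, rfl, rfl⟩

theorem offDiagGraph_injective : Function.Injective (offDiagGraph (n := n)) := by
  intro σ τ h
  ext i
  by_cases hσ : σ i = i
  · by_cases hτ : τ i = i
    · rw [hσ, hτ]
    · have : (τ i, i) ∈ σ.offDiagGraph := h ▸ mem_offDiagGraph.2 ⟨rfl, hτ⟩
      exact (mem_offDiagGraph.1 this).1
  · have : (σ i, i) ∈ τ.offDiagGraph := h ▸ mem_offDiagGraph.2 ⟨rfl, hσ⟩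
    exact (mem_offDiagGraph.1 this).1.symm

theorem prod_eq_prod_offDiagGraph {M : Type*} [CommMonoid M] (σ : Perm n) {x : n × n → M}
    (hx : ∀ i, x (i, i) = 1) :
    ∏ i, x (σ i, i) = ∏ e ∈ σ.offDiagGraph, x e := by
  rw [offDiagGraph, prod_image fun _ _ _ _ h => (Prod.ext_iff.1 h).2]
  exact (prod_subset (subset_univ _)
    fun i _ hi => by rw [notMem_support.1 hi, hx]).symm

end Equiv.Perm

section Determinant

variable {n : Type*} [Fintype n] [DecidableEq n]

open Equiv

def offDiagDetCoeff (m : Finset (n × n)) : ℝ :=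
  ∑ σ ∈ univ.erase (1 : Perm n) with σ.offDiagGraph = m, (Perm.sign σ : ℝ)

theorem offDiagDetCoeff_offDiagGraph {σ : Perm n} (hσ : σ ≠ 1) :
    offDiagDetCoeff σ.offDiagGraph = Perm.sign σ :=
  sum_eq_single_of_mem σ (mem_filter.2 ⟨mem_erase.2 ⟨hσ, mem_univ σ⟩, rfl⟩)
    fun _ hτ hne => absurd (Perm.offDiagGraph_injective (mem_filter.1 hτ).2) hne

theorem det_eq_one_add_multiaffineEval {x : n × n → ℝ} (hdiag : ∀ i, x (i, i) = 1)
    {s : Finset (n × n)} (hs : ∀ e : n × n, e.1 ≠ e.2 → e ∉ s → x e = 0) :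
    (Matrix.of fun i j => x (i, j)).det = 1 + multiaffineEval s offDiagDetCoeff x := by
  set term : Perm n → ℝ := fun σ => Perm.sign σ * ∏ e ∈ σ.offDiagGraph, x e
  have h_det : (Matrix.of fun i j => x (i, j)).det = ∑ σ, term σ := by
    rw [Matrix.det_apply']
    exact sum_congr rfl fun σ _ => congrArg _ (σ.prod_eq_prod_offDiagGraph hdiag)
  have h_support : ∀ σ ∈ univ.erase 1, term σ ≠ 0 → σ.offDiagGraph ∈ s.powerset := by
    intro σ _ hσ
    refine mem_powerset.2 fun e he => ?_
    by_contra hes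
    exact hσ <| mul_eq_zero_of_right _ <|
      prod_eq_zero he (hs e (Perm.mem_offDiagGraph.1 he).2 hes)
  calc (Matrix.of fun i j => x (i, j)).det
      = 1 + ∑ σ ∈ univ.erase 1, term σ := by
        rw [h_det, ← add_sum_erase _ _ (mem_univ 1)]
        simp [term, Perm.offDiagGraph]
    _ = 1 + ∑ σ ∈ univ.erase 1 with σ.offDiagGraph ∈ s.powerset, term σ := by
        rw [sum_filter_of_ne h_support]
    _ = 1 + multiaffineEval s offDiagDetCoeff x := by
        rw [← sum_fiberwise_eq_sum_filter, multiaffineEval]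
        refine congrArg _ (sum_congr rfl fun m _ => ?_)
        rw [offDiagDetCoeff, sum_mul]
        exact sum_congr rfl fun σ hσ => by simp only [term, (mem_filter.1 hσ).2]

theorem det_ne_one_of_forall_multiaffineEval_ne_zero {x : n × n → ℝ}
    (hdiag : ∀ i, x (i, i) = 1)
    (hgen : ∀ s : Finset (n × n), (∀ e ∈ s, e.1 ≠ e.2) → (∃ m ⊆ s, offDiagDetCoeff m ≠ 0) →
      (∀ e ∈ s, x e ≠ 0) → multiaffineEval s offDiagDetCoeff x ≠ 0)
    {σ : Perm n} (hσ : σ ≠ 1) (hprod : ∏ i, x (σ i, i) ≠ 0) :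
    (Matrix.of fun i j => x (i, j)).det ≠ 1 := by
  set s := univ.filter fun e : n × n => e.1 ≠ e.2 ∧ x e ≠ 0
  have hσs : σ.offDiagGraph ⊆ s := by
    rw [σ.prod_eq_prod_offDiagGraph hdiag, prod_ne_zero_iff] at hprod
    exact fun e he => mem_filter.2 ⟨mem_univ e, (Perm.mem_offDiagGraph.1 he).2, hprod e he⟩
  have hs : ∀ e : n × n, e.1 ≠ e.2 → e ∉ s → x e = 0 := fun e he hes =>
    by_contra fun hx => hes (mem_filter.2 ⟨mem_univ e, he, hx⟩)
  have hcoeff : offDiagDetCoeff σ.offDiagGraph ≠ 0 := by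
    rw [offDiagDetCoeff_offDiagGraph hσ]
    exact Int.cast_ne_zero.2 (Perm.sign σ).ne_zero
  rw [det_eq_one_add_multiaffineEval hdiag hs, Ne, add_eq_left]
  exact hgen s (fun e he => (mem_filter.1 he).2.1) ⟨_, hσs, hcoeff⟩
    fun e he => (mem_filter.1 he).2.2

end Determinant

theorem typeC_det_one_with_nonzero_offdiag_term_prob_zero_general
    (n : ℕ)
    (μ : Fin n → Fin n → Measure ℝ)
    [∀ i j, IsProbabilityMeasure (μ i j)]
    (hfixed : ∀ i : Fin n, μ i i = Measure.dirac 1)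
    (hatomless : ∀ i j : Fin n, i ≠ j → ∀ x : ℝ, x ≠ 0 → μ i j {x} = 0) :
    Measure.pi (fun i => Measure.pi (fun j => μ i j))
      {C : Fin n → Fin n → ℝ | (Matrix.of C).det = 1 ∧
        ∃ σ : Equiv.Perm (Fin n), σ ≠ 1 ∧ (∏ i, C (σ i) i) ≠ 0} = 0 := by
  set ν := Measure.pi fun e : Fin n × Fin n => μ e.1 e.2
  have hdiag : ∀ᵐ x ∂ν, ∀ i, x (i, i) = 1 := ae_all_iff.2 fun i =>
    (Measure.tendsto_eval_ae_ae (i := (i, i))).eventually (p := fun t => t = 1) <| by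
      rw [hfixed, ae_dirac_eq]
      exact Filter.eventually_pure.2 rfl
  have hgen : ∀ᵐ x ∂ν, ∀ s : Finset (Fin n × Fin n), (∀ e ∈ s, e.1 ≠ e.2) →
      (∃ m ⊆ s, offDiagDetCoeff m ≠ 0) → (∀ e ∈ s, x e ≠ 0) →
      multiaffineEval s offDiagDetCoeff x ≠ 0 := by
    refine ae_all_iff.2 fun s => ?_
    by_cases hs : (∀ e ∈ s, e.1 ≠ e.2) ∧ ∃ m ⊆ s, offDiagDetCoeff m ≠ 0
    · have hnull := pi_multiaffineEval_eq_zero_null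
        (fun e he => hatomless e.1 e.2 (hs.1 e he)) hs.2
      filter_upwards [measure_eq_zero_iff_ae_notMem.1 hnull] with x hx _ _ hnz heq
      exact hx ⟨heq, hnz⟩
    · exact Filter.Eventually.of_forall fun _ h₁ h₂ => absurd ⟨h₁, h₂⟩ hs
  rw [Measure.pi_pi_eq_map_curry, MeasurableEquiv.map_apply, measure_eq_zero_iff_ae_notMem]
  filter_upwards [hdiag, hgen] with x hx hgx ⟨hdet, σ, hσ, hprod⟩
  exact det_ne_one_of_forall_multiaffineEval_ne_zero hx hgx hσ hprod hdet

/-- For a random `n × n` real matrix of type `C_n` — all diagonal entries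
are (almost surely) fixed equal to `1`, and the off-diagonal entries are independent with
laws that are atomless off `0` — the event that `det C = 1` while some non-diagonal term
of the permutation expansion of the determinant is nonzero has probability `0`. -/
theorem typeC_det_one_with_nonzero_offdiag_term_prob_zero
    (n : ℕ) (hn : 1 ≤ n)
    (μ : Fin n → Fin n → Measure ℝ)
    [∀ i j, IsProbabilityMeasure (μ i j)]
    (hfixed : ∀ i : Fin n, μ i i = Measure.dirac 1)
    (hatomless : ∀ i j : Fin n, i ≠ j → ∀ x : ℝ, x ≠ 0 → μ i j {x} = 0) :
    Measure.pi (fun i => Measure.pi (fun j => μ i j))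
      {C : Fin n → Fin n → ℝ | (Matrix.of C).det = 1 ∧
        ∃ σ : Equiv.Perm (Fin n), σ ≠ 1 ∧ (∏ i, C (σ i) i) ≠ 0} = 0 :=
  typeC_det_one_with_nonzero_offdiag_term_prob_zero_general n μ hfixed hatomless
end

section
/- Let n ≥ 1. If C is an n×n random real matrix whose diagonal entries are all fixed equal to 1 and whose off-diagonal entries are independent, each distributed according to a Borel probability measure on ℝ that is atomless off 0, then P(det C = 1) = P(per C̃ = 1), where C̃ is the indicator matrix of C. -/
/-!
Condition on the pattern `S` of nonzero off-diagonal entries. Almost surely the diagonal is `1`,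
so `per C̃` counts the permutations whose off-diagonal graph lies in `S`, and `det C` is the
value at `C` of the generic determinant `det (patternMatrix S)`. If the identity is the only such
permutation, both equal `1`. Otherwise `per C̃ ≥ 2`, while `det (patternMatrix S) - 1` is a
nonzero polynomial (its coefficient at the monomial of a nontrivial admissible permutation is
`±1`) in independent variables that are atomless once restricted to `{0}ᶜ`; such a polynomial
vanishes with probability zero, so `det C = 1` is a null event.
-/

open MeasureTheory

/-- The indicator matrix of a real matrix: entry `1` where the entry is nonzero, `0` where
the entry is `0`. -/
noncomputable def indicatorMatrix {n : ℕ} (A : Matrix (Fin n) (Fin n) ℝ) :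
    Matrix (Fin n) (Fin n) ℝ :=
  Matrix.of fun i j => if A i j = 0 then 0 else 1

open Finset Equiv MvPolynomial

namespace MvPolynomial

theorem ae_eval_elim_ne_zero {α : Type*} (ν : Measure ℝ) [NullSingletonClass ν]
    {p : MvPolynomial (Option α) ℝ} {y : α → ℝ}
    (hy : eval y (optionEquivLeft ℝ α p).leadingCoeff ≠ 0) :
    ∀ᵐ t ∂ν, eval (fun i => Option.elim i t y) p ≠ 0 := by
  have hq : (optionEquivLeft ℝ α p).map (eval y) ≠ 0 := fun h => hy <| by
    rw [Polynomial.leadingCoeff, ← Polynomial.coeff_map, h, Polynomial.coeff_zero]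
  rw [ae_iff]
  refine measure_mono_null (fun t ht => ?_)
    ((Polynomial.finite_setOfPred_isRoot hq).measure_zero _)
  simpa [optionEquivLeft_elim_eval] using ht

theorem ae_eval_ne_zero {ι : Type*} [Fintype ι] (ν : ι → Measure ℝ) [∀ i, SigmaFinite (ν i)]
    [∀ i, NullSingletonClass (ν i)] {p : MvPolynomial ι ℝ} (hp : p ≠ 0) :
    ∀ᵐ x ∂Measure.pi ν, eval x p ≠ 0 := by
  -- Add one variable at a time: off the zero set of the leading coefficient in the new
  -- variable, each slice of the zero set is a finite set of roots.
  revert ν p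
  refine Fintype.induction_empty_option (P := fun ι _ => ∀ (ν : ι → Measure ℝ)
    [∀ i, SigmaFinite (ν i)] [∀ i, NullSingletonClass (ν i)] {p : MvPolynomial ι ℝ}, p ≠ 0 →
    ∀ᵐ x ∂Measure.pi ν, eval x p ≠ 0) ?_ ?_ ?_ ι
  · intro α β _ e ih ν _ _ p hp
    let := Fintype.ofEquiv β e.symm
    have hrename := ih (fun a => ν (e a)) (p := rename e.symm p)
      ((rename_injective _ e.symm.injective).ne_iff' (map_zero _) |>.mpr hp)
    filter_upwards [(measurePreserving_piCongrLeft ν e).symm.quasiMeasurePreserving.ae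
      hrename] with x hx
    simpa [eval_rename, Function.comp_def, MeasurableEquiv.piCongrLeft] using hx
  · intro ν _ _ p hp
    obtain ⟨c, rfl⟩ := C_surjective PEmpty p
    exact Filter.Eventually.of_forall fun x => by simpa using hp
  · intro α _ ih ν _ _ p hp
    have hlead : (optionEquivLeft ℝ α p).leadingCoeff ≠ 0 :=
      Polynomial.leadingCoeff_ne_zero.mpr <|
        (optionEquivLeft ℝ α).injective.ne_iff' (map_zero _) |>.mpr hp
    let e := MeasurableEquiv.piOptionEquivProd (fun _ : Option α => ℝ)
    have he : MeasurePreserving e (Measure.pi ν)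
        ((Measure.pi fun a => ν (some a)).prod (ν none)) :=
      MeasurePreserving.symm e.symm ⟨e.symm.measurable, Measure.pi_map_piOptionEquivProd ν⟩
    have he_symm : ∀ y t, e.symm (y, t) = fun i => Option.elim i t y := fun y t => by
      ext i; cases i <;> rfl
    have hmeas : MeasurableSet {z | eval (e.symm z) p ≠ 0} :=
      ((continuous_eval p).measurable.comp e.symm.measurable) (measurableSet_singleton 0).compl
    have hprod : ∀ᵐ z ∂(Measure.pi fun a => ν (some a)).prod (ν none), eval (e.symm z) p ≠ 0 :=
      (Measure.ae_prod_iff_ae_ae hmeas).mpr <| by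
        filter_upwards [ih _ hlead] with y hy
        simpa only [he_symm] using ae_eval_elim_ne_zero (ν none) hy
    filter_upwards [he.quasiMeasurePreserving.ae hprod] with x hx
    simpa using hx

theorem ae_eval_ne_zero_of_mem_supported {ι : Type*} [Fintype ι] (ν : ι → Measure ℝ)
    [∀ i, SigmaFinite (ν i)] {s : Set ι} (hs : ∀ i ∈ s, NullSingletonClass (ν i))
    {p : MvPolynomial ι ℝ} (hps : p ∈ supported ℝ s) (hp : p ≠ 0) :
    ∀ᵐ x ∂Measure.pi ν, eval x p ≠ 0 := by
  classical
  rw [supported_eq_range_rename] at hps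
  obtain ⟨p, rfl⟩ := hps
  have : ∀ i : s, NullSingletonClass (ν i) := fun i => hs i i.2
  have hrestr := (Measure.quasiMeasurePreserving_fst
    (ν := Measure.pi fun i : {i // i ∉ s} => ν i)).ae (ae_eval_ne_zero (fun i : s => ν i)
    (p := p) (fun h => hp (by rw [h, map_zero])))
  filter_upwards [(measurePreserving_piEquivPiSubtypeProd ν (· ∈ s)).quasiMeasurePreserving.ae
    hrestr] with x hx
  simpa [eval_rename, Function.comp_def] using hx

theorem ae_eval_ne_zero_of_forall_ne_zero {ι : Type*} [Fintype ι]
    (ν : ι → Measure ℝ) [∀ i, SigmaFinite (ν i)] {s : Set ι}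
    (hs : ∀ i ∈ s, ∀ x ≠ 0, ν i {x} = 0) {p : MvPolynomial ι ℝ} (hps : p ∈ supported ℝ s)
    (hp : p ≠ 0) : ∀ᵐ x ∂Measure.pi ν, (∀ i ∈ s, x i ≠ 0) → eval x p ≠ 0 := by
  classical
  -- Restricting the laws indexed by `s` to `{0}ᶜ` removes their only possible atom.
  let t : ι → Set ℝ := fun i => if i ∈ s then {0}ᶜ else Set.univ
  have ht : Set.pi Set.univ t = {x | ∀ i ∈ s, x i ≠ 0} := by
    ext x; simp [t]
  have hrestr : ∀ i ∈ s, NullSingletonClass ((ν i).restrict (t i)) := fun i hi => ⟨fun x => by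
    rw [Measure.restrict_apply (measurableSet_singleton x)]
    by_cases hx : x = 0
    · simp [t, hi, hx]
    · exact measure_mono_null Set.inter_subset_left (hs i hi x hx)⟩
  have := ae_eval_ne_zero_of_mem_supported _ hrestr hps hp
  rw [← Measure.restrict_pi_pi, ae_restrict_iff' (MeasurableSet.univ_pi fun i => ?_), ht] at this
  · exact this
  · by_cases hi : i ∈ s <;> simp [t, hi]

end MvPolynomial

theorem MeasureTheory.measurePreserving_curry {ι κ X : Type*} [Fintype ι] [Fintype κ]
    [MeasurableSpace X] (μ : ι → κ → Measure X) [∀ i j, IsProbabilityMeasure (μ i j)] :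
    MeasurePreserving (MeasurableEquiv.curry ι κ X) (Measure.pi fun p : ι × κ => μ p.1 p.2)
      (Measure.pi fun i => Measure.pi fun j => μ i j) :=
  ⟨(MeasurableEquiv.curry ι κ X).measurable, by
    simpa only [Measure.infinitePi_eq_pi] using Measure.infinitePi_map_curry μ⟩

section Pattern

variable {m R : Type*} [Fintype m] [DecidableEq m]

noncomputable def Equiv.Perm.offDiagExponent (σ : Perm m) : m × m →₀ ℕ :=
  ∑ i ∈ σ.support, Finsupp.single (σ i, i) 1

theorem Equiv.Perm.offDiagExponent_apply (σ : Perm m) (a b : m) :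
    σ.offDiagExponent (a, b) = if σ b = a ∧ a ≠ b then 1 else 0 := by
  have : ∀ i, (σ i = a ∧ i = b) ↔ (b = i ∧ σ b = a) := fun i => by
    constructor <;> rintro ⟨h1, rfl⟩ <;> simp_all
  simp only [Perm.offDiagExponent, Finsupp.finsetSum_apply, Finsupp.single_apply,
    Prod.mk.injEq, this, ite_and, Finset.sum_ite_eq, Perm.mem_support]
  by_cases h : σ b = a <;> simp [h, eq_comm]

theorem Equiv.Perm.offDiagExponent_injective :
    Function.Injective (Perm.offDiagExponent : Perm m → m × m →₀ ℕ) := by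
  intro σ τ h
  ext b
  have key : ∀ a, (σ b = a ∧ a ≠ b) ↔ (τ b = a ∧ a ≠ b) := fun a => by
    have := congrArg (· (a, b)) h
    simp only [Perm.offDiagExponent_apply] at this
    split_ifs at this <;> tauto
  by_contra hne
  by_cases hσ : σ b = b
  · exact (key (τ b)).mpr ⟨rfl, fun h => hne (hσ.trans h.symm)⟩ |>.1 |> hne
  · exact hne ((key (σ b)).mp ⟨rfl, hσ⟩).1.symm

variable [CommRing R] (S : Finset (m × m))

noncomputable def patternMatrix : Matrix m m (MvPolynomial (m × m) R) :=
  Matrix.of fun a b => if a = b then 1 else if (a, b) ∈ S then X (a, b) else 0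

def permsInPattern : Finset (Perm m) :=
  {τ | ∀ i ∈ τ.support, (τ i, i) ∈ S}

theorem mem_permsInPattern {τ : Perm m} :
    τ ∈ permsInPattern S ↔ ∀ i ∈ τ.support, (τ i, i) ∈ S := by
  simp [permsInPattern]

theorem one_mem_permsInPattern : 1 ∈ permsInPattern S := by
  simp [permsInPattern]

theorem prod_patternMatrix (τ : Perm m) :
    ∏ i, patternMatrix (R := R) S (τ i) i =
      if τ ∈ permsInPattern S then monomial τ.offDiagExponent 1 else 0 := by
  have hfix : ∀ i ∉ τ.support, patternMatrix (R := R) S (τ i) i = 1 := fun i hi => by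
    simp [patternMatrix, Perm.notMem_support.mp hi]
  rw [← prod_subset (subset_univ _) fun i _ hi => hfix i hi]
  split_ifs with hτ
  · rw [Perm.offDiagExponent, monomial_sum_one]
    refine prod_congr rfl fun i hi => ?_
    simp [patternMatrix, Perm.mem_support.mp hi, (mem_permsInPattern S).mp hτ i hi, X]
  · obtain ⟨i, hi, hiS⟩ : ∃ i ∈ τ.support, (τ i, i) ∉ S := by
      simpa [mem_permsInPattern] using hτ
    exact prod_eq_zero hi (by simp [patternMatrix, Perm.mem_support.mp hi, hiS])

theorem det_patternMatrix :
    (patternMatrix (R := R) S).det =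
      ∑ τ ∈ permsInPattern S, monomial τ.offDiagExponent ((Perm.sign τ : ℤ) : R) := by
  simp_rw [Matrix.det_apply', prod_patternMatrix, mul_ite, mul_zero, sum_ite_mem, univ_inter]
  refine sum_congr rfl fun τ _ => ?_
  rw [← map_intCast (C : R →+* MvPolynomial (m × m) R), C_mul_monomial, mul_one]

theorem coeff_offDiagExponent_det_patternMatrix {σ : Perm m} (hσ : σ ∈ permsInPattern S) :
    (patternMatrix (R := R) S).det.coeff σ.offDiagExponent = ((Perm.sign σ : ℤ) : R) := by
  simp_rw [det_patternMatrix, coeff_sum, coeff_monomial,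
    Perm.offDiagExponent_injective.eq_iff, sum_ite_eq', if_pos hσ]

theorem det_patternMatrix_sub_one_ne_zero [Nontrivial R] {σ : Perm m}
    (hσ : σ ∈ permsInPattern S) (hσ1 : σ ≠ 1) : (patternMatrix (R := R) S).det - 1 ≠ 0 := by
  have hexp : σ.offDiagExponent ≠ 0 := fun h => hσ1 <| Perm.offDiagExponent_injective <| by
    rw [h, Perm.offDiagExponent, Perm.support_one, sum_empty]
  intro h
  have := congrArg (coeff σ.offDiagExponent) h
  rw [coeff_sub, coeff_offDiagExponent_det_patternMatrix S hσ, coeff_one, if_neg hexp.symm,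
    sub_zero, coeff_zero] at this
  rcases Int.units_eq_one_or (Perm.sign σ) with h1 | h1 <;> simp [h1] at this

theorem det_patternMatrix_of_permsInPattern_eq (h : permsInPattern S = {1}) :
    (patternMatrix (R := R) S).det = 1 := by
  simp [det_patternMatrix, h, Perm.offDiagExponent]

theorem det_patternMatrix_mem_supported :
    (patternMatrix (R := R) S).det ∈ supported R (S : Set (m × m)) := by
  rw [Matrix.det_apply']
  refine Subalgebra.sum_mem _ fun τ _ => Subalgebra.mul_mem _ (Subalgebra.intCast_mem _ _) <|
    Subalgebra.prod_mem _ fun i _ => ?_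
  simp only [patternMatrix, Matrix.of_apply]
  split_ifs with h1 h2
  · exact Subalgebra.one_mem _
  · rw [supported_eq_adjoin_X]
    exact Algebra.subset_adjoin ⟨_, h2, rfl⟩
  · exact Subalgebra.zero_mem _

theorem eval_det_patternMatrix {g : m × m → R} (hdiag : ∀ i, g (i, i) = 1)
    (hzero : ∀ a b, a ≠ b → (a, b) ∉ S → g (a, b) = 0) :
    eval g (patternMatrix S).det = (Matrix.of fun a b => g (a, b)).det := by
  rw [RingHom.map_det]
  congr 1
  ext a b
  simp only [patternMatrix, RingHom.mapMatrix_apply, Matrix.map_apply, Matrix.of_apply]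
  split_ifs with h1 h2
  · simp [h1, hdiag]
  · simp
  · simp [hzero a b h1 h2]

end Pattern

theorem permanent_indicatorMatrix {n : ℕ} (A : Matrix (Fin n) (Fin n) ℝ) :
    (indicatorMatrix A).permanent = #{σ : Perm (Fin n) | ∀ i, A (σ i) i ≠ 0} := by
  have h : ∀ a : ℝ, (if a = 0 then (0 : ℝ) else 1) = if a ≠ 0 then 1 else 0 :=
    fun _ => (ite_not _ _ _).symm
  simp_rw [Matrix.permanent, indicatorMatrix, Matrix.of_apply, h, prod_boole, mem_univ,
    true_imp_iff, sum_boole]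

theorem ae_permsInPattern_eq_singleton {m : Type*} [Fintype m] [DecidableEq m]
    (ν : m × m → Measure ℝ) [∀ v, SigmaFinite (ν v)]
    (hatomless : ∀ a b, a ≠ b → ∀ x : ℝ, x ≠ 0 → ν (a, b) {x} = 0) (S : Finset (m × m)) :
    ∀ᵐ g ∂Measure.pi ν, (∀ v ∈ S, v.1 ≠ v.2 ∧ g v ≠ 0) →
      eval g (patternMatrix S).det = 1 → permsInPattern S = {1} := by
  by_cases hS : ∀ v ∈ S, v.1 ≠ v.2
  swap
  · exact Filter.Eventually.of_forall fun g hg => absurd (fun v hv => (hg v hv).1) hS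
  by_cases hP : permsInPattern S = {1}
  · exact Filter.Eventually.of_forall fun _ _ _ => hP
  obtain ⟨σ, hσ, hσ1⟩ : ∃ σ ∈ permsInPattern S, σ ≠ 1 := by
    by_contra! h
    exact hP (eq_singleton_iff_unique_mem.mpr ⟨one_mem_permsInPattern S, h⟩)
  filter_upwards [ae_eval_ne_zero_of_forall_ne_zero ν (fun v hv => hatomless _ _ (hS v hv))
    (sub_mem (det_patternMatrix_mem_supported S) (Subalgebra.one_mem _))
    (det_patternMatrix_sub_one_ne_zero S hσ hσ1)] with g hg hgS hdet
  exact absurd (by rw [map_sub, hdet, map_one, sub_self]) (hg fun v hv => (hgS v hv).2)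

theorem det_eq_one_iff_permanent_indicatorMatrix_eq_one {n : ℕ} {g : Fin n × Fin n → ℝ}
    (hdiag : ∀ i, g (i, i) = 1)
    (hgen : ∀ S : Finset (Fin n × Fin n), (∀ v ∈ S, v.1 ≠ v.2 ∧ g v ≠ 0) →
      eval g (patternMatrix S).det = 1 → permsInPattern S = {1}) :
    (Matrix.of (Function.curry g)).det = 1 ↔
      (indicatorMatrix (Matrix.of (Function.curry g))).permanent = 1 := by
  set S : Finset (Fin n × Fin n) := {v | v.1 ≠ v.2 ∧ g v ≠ 0}
  have hdet : (Matrix.of (Function.curry g)).det = eval g (patternMatrix S).det :=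
    (eval_det_patternMatrix S hdiag fun a b hab hS => by simpa [S, hab] using hS).symm
  have hperms : ({σ | ∀ i, Matrix.of (Function.curry g) (σ i) i ≠ 0} : Finset (Perm (Fin n))) =
      permsInPattern S := by
    ext σ
    rw [mem_filter_univ, mem_permsInPattern]
    simp only [Perm.mem_support, S, mem_filter_univ, Matrix.of_apply, Function.curry_apply]
    refine ⟨fun h i hi => ⟨hi, h i⟩, fun h i => ?_⟩
    by_cases hi : σ i = i
    · simp [hi, hdiag]
    · exact (h i hi).2
  rw [permanent_indicatorMatrix, hdet, hperms, Nat.cast_eq_one, card_eq_one]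
  constructor
  · exact fun h => ⟨1, hgen S (fun v hv => by simpa [S] using hv) h⟩
  · rintro ⟨σ, hσ⟩
    have h1 := one_mem_permsInPattern S
    rw [hσ, mem_singleton] at h1
    subst h1
    rw [det_patternMatrix_of_permsInPattern_eq S hσ, map_one]

theorem typeC_prob_det_one_eq_prob_permanent_indicator_one_general
    (n : ℕ)
    (μ : Fin n → Fin n → Measure ℝ)
    [∀ i j, IsProbabilityMeasure (μ i j)]
    (hfixed : ∀ i : Fin n, μ i i = Measure.dirac 1)
    (hatomless : ∀ i j : Fin n, i ≠ j → ∀ x : ℝ, x ≠ 0 → μ i j {x} = 0) :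
    Measure.pi (fun i => Measure.pi (fun j => μ i j))
        {C : Fin n → Fin n → ℝ | (Matrix.of C).det = 1}
      = Measure.pi (fun i => Measure.pi (fun j => μ i j))
        {C : Fin n → Fin n → ℝ | (indicatorMatrix (Matrix.of C)).permanent = 1} := by
  let ν : Fin n × Fin n → Measure ℝ := fun v => μ v.1 v.2
  have hdiag : ∀ᵐ g ∂Measure.pi ν, ∀ i, g (i, i) = 1 := ae_all_iff.mpr fun i =>
    (Measure.tendsto_eval_ae_ae (i := (i, i))).eventually (p := (· = 1)) <| by
      simp only [ν, hfixed, ae_dirac_eq, Filter.eventually_pure]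
  have hgen := ae_all_iff.mpr (ae_permsInPattern_eq_singleton ν hatomless)
  rw [← (measurePreserving_curry μ).measure_preimage_equiv,
    ← (measurePreserving_curry μ).measure_preimage_equiv]
  refine measure_congr (Filter.eventuallyEq_set.mpr ?_)
  filter_upwards [hdiag, hgen] with g hg1 hg2
  exact det_eq_one_iff_permanent_indicatorMatrix_eq_one hg1 hg2

/-- For a random `n × n` real matrix of type `C_n` — all diagonal entries
are (almost surely) fixed equal to `1`, and the off-diagonal entries are independent with
laws that are atomless off `0` — we have `P(det C = 1) = P(per C̃ = 1)`, where `C̃` is the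
indicator matrix of `C`. -/
theorem typeC_prob_det_one_eq_prob_permanent_indicator_one
    (n : ℕ) (hn : 1 ≤ n)
    (μ : Fin n → Fin n → Measure ℝ)
    [∀ i j, IsProbabilityMeasure (μ i j)]
    (hfixed : ∀ i : Fin n, μ i i = Measure.dirac 1)
    (hatomless : ∀ i j : Fin n, i ≠ j → ∀ x : ℝ, x ≠ 0 → μ i j {x} = 0) :
    Measure.pi (fun i => Measure.pi (fun j => μ i j))
        {C : Fin n → Fin n → ℝ | (Matrix.of C).det = 1}
      = Measure.pi (fun i => Measure.pi (fun j => μ i j))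
        {C : Fin n → Fin n → ℝ | (indicatorMatrix (Matrix.of C)).permanent = 1} :=
  typeC_prob_det_one_eq_prob_permanent_indicator_one_general n μ hfixed hatomless
end

section
/- Let n ≥ 2 and consider n×n matrices with entries in {0,1} whose diagonal entries at positions (i,i) for i ≠ 1 all equal 1 (the variable positions being all off-diagonal positions together with position (1,1)). Every such matrix with permanent 0 has at least n variable entries equal to 0; and the number of such matrices with permanent 0 and exactly n variable entries equal to 0 is exactly 2, namely the matrix whose first row is all zeros and the matrix whose first column is all zeros (all other variable entries equal to 1). -/
/-- The real `{0,1}`-matrix associated with a Boolean matrix. -/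
noncomputable def boolToMatrix {n : ℕ} (b : Fin n → Fin n → Bool) :
    Matrix (Fin n) (Fin n) ℝ :=
  Matrix.of fun i j => if b i j then 1 else 0

/-- The number of variable entries (off-diagonal entries together with the special
diagonal position `(i₀, i₀)`) equal to `0` of a Boolean `n × n` matrix. -/
def varZerosCount {n : ℕ} (i₀ : Fin n) (b : Fin n → Fin n → Bool) : ℕ :=
  (Finset.univ.filter fun p : Fin n × Fin n =>
    (p.1 ≠ p.2 ∨ p = (i₀, i₀)) ∧ b p.1 p.2 = false).card

lemma boolToMatrix_nonneg {n : ℕ} (b : Fin n → Fin n → Bool) (i j : Fin n) :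
    0 ≤ boolToMatrix b i j := by
  simp only [boolToMatrix, Matrix.of_apply]
  split <;> norm_num

lemma boolToMatrix_eq_zero_iff {n : ℕ} (b : Fin n → Fin n → Bool) (i j : Fin n) :
    boolToMatrix b i j = 0 ↔ b i j = false := by
  simp only [boolToMatrix, Matrix.of_apply]
  cases h : b i j <;> simp

lemma permanent_boolToMatrix_eq_zero_iff {n : ℕ} (b : Fin n → Fin n → Bool) :
    (boolToMatrix b).permanent = 0 ↔
      ∀ σ : Equiv.Perm (Fin n), ∃ i, b (σ i) i = false := by
  unfold Matrix.permanent
  rw [Finset.sum_eq_zero_iff_of_nonneg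
    (fun σ _ => Finset.prod_nonneg fun i _ => boolToMatrix_nonneg b (σ i) i)]
  constructor
  · intro h σ
    have := h σ (Finset.mem_univ σ)
    rw [Finset.prod_eq_zero_iff] at this
    obtain ⟨i, _, hi⟩ := this
    exact ⟨i, (boolToMatrix_eq_zero_iff b _ _).mp hi⟩
  · intro h σ _
    obtain ⟨i, hi⟩ := h σ
    exact Finset.prod_eq_zero (Finset.mem_univ i)
      ((boolToMatrix_eq_zero_iff b _ _).mpr hi)

/-- Key structural lemma extracted from Hall's theorem: a zero-permanent matrix of
type `B̃ₙ` contains an all-zero `R × S` block of variable entries with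
`|R| + |S| ≥ n + 1`. -/
lemma key_block {n : ℕ} (b : Fin n → Fin n → Bool) (i₀ : Fin n)
    (hb : ∀ i : Fin n, i ≠ i₀ → b i i = true)
    (hp : (boolToMatrix b).permanent = 0) :
    ∃ R S : Finset (Fin n), 1 ≤ R.card ∧ 1 ≤ S.card ∧ n + 1 ≤ R.card + S.card ∧
      (∀ j ∈ R, ∀ i ∈ S, b j i = false) ∧
      R ×ˢ S ⊆ Finset.univ.filter (fun p : Fin n × Fin n =>
        (p.1 ≠ p.2 ∨ p = (i₀, i₀)) ∧ b p.1 p.2 = false) := by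
  set t : Fin n → Finset (Fin n) := fun i => Finset.univ.filter fun j => b j i = true with ht
  have hhall : ¬ ∀ s : Finset (Fin n), s.card ≤ (s.biUnion t).card := by
    intro hall
    rw [Finset.all_card_le_biUnion_card_iff_exists_injective] at hall
    obtain ⟨f, hfinj, hf⟩ := hall
    have hbij : Function.Bijective f := (Finite.injective_iff_bijective).mp hfinj
    obtain ⟨i, hi⟩ := (permanent_boolToMatrix_eq_zero_iff b).mp hp (Equiv.ofBijective f hbij)
    have := hf i
    simp only [ht, Finset.mem_filter] at this
    rw [show (Equiv.ofBijective f hbij) i = f i from rfl] at hi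
    rw [this.2] at hi
    exact Bool.noConfusion hi
  push_neg at hhall
  obtain ⟨S, hS⟩ := hhall
  set N := S.biUnion t with hN
  refine ⟨Nᶜ, S, ?_, ?_, ?_, ?_, ?_⟩
  · have h1 : Nᶜ.card = n - N.card := by
      rw [Finset.card_compl, Fintype.card_fin]
    have h2 : S.card ≤ n := by
      simpa using Finset.card_le_univ S
    omega
  · omega
  · have h1 : Nᶜ.card = n - N.card := by
      rw [Finset.card_compl, Fintype.card_fin]
    have h2 : S.card ≤ n := by
      simpa using Finset.card_le_univ S
    have h3 : N.card ≤ n := by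
      have := Finset.card_le_univ N; simpa using this
    omega
  · intro j hj i hi
    by_contra hcon
    have hji : b j i = true := by
      cases h : b j i
      · exact absurd h hcon
      · rfl
    have : j ∈ N := Finset.mem_biUnion.mpr ⟨i, hi, by simp [ht, hji]⟩
    exact (Finset.mem_compl.mp hj) this
  · intro p hp'
    rw [Finset.mem_product] at hp'
    have hfalse : b p.1 p.2 = false := by
      by_contra hcon
      have hji : b p.1 p.2 = true := by
        cases h : b p.1 p.2
        · exact absurd h hcon
        · rfl
      have : p.1 ∈ N := Finset.mem_biUnion.mpr ⟨p.2, hp'.2, by simp [ht, hji]⟩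
      exact (Finset.mem_compl.mp hp'.1) this
    refine Finset.mem_filter.mpr ⟨Finset.mem_univ _, ?_, hfalse⟩
    by_cases hd : p.1 = p.2
    · right
      have hkey : p.1 = i₀ := by
        by_contra hne
        have hne2 : p.2 ≠ i₀ := fun h => hne (hd.trans h)
        have hpf : b p.2 p.2 = false := by rw [hd] at hfalse; exact hfalse
        rw [hb p.2 hne2] at hpf
        exact Bool.noConfusion hpf
      rw [Prod.ext_iff]
      exact ⟨hkey, hd ▸ hkey⟩
    · left; exact hd

/-- Part 1: at least `n` variable zeros. -/
lemma min_zeros {n : ℕ} (b : Fin n → Fin n → Bool) (i₀ : Fin n)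
    (hb : ∀ i : Fin n, i ≠ i₀ → b i i = true)
    (hp : (boolToMatrix b).permanent = 0) :
    n ≤ varZerosCount i₀ b := by
  obtain ⟨R, S, hR, hS, hsum, _, hsub⟩ := key_block b i₀ hb hp
  have hcard := Finset.card_le_card hsub
  rw [Finset.card_product] at hcard
  have hmul : R.card + S.card ≤ R.card * S.card + 1 := by
    obtain ⟨a, ha⟩ := Nat.exists_eq_add_of_le hR
    obtain ⟨c, hc⟩ := Nat.exists_eq_add_of_le hS
    rw [ha, hc]
    nlinarith
  unfold varZerosCount
  omega

/-- Part 3: classification in the equality case. -/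
lemma classify {n : ℕ} (hn : 2 ≤ n) (b : Fin n → Fin n → Bool) (i₀ : Fin n)
    (hb : ∀ i : Fin n, i ≠ i₀ → b i i = true)
    (hp : (boolToMatrix b).permanent = 0)
    (hc : varZerosCount i₀ b = n) :
    (b = fun i _ => if i = i₀ then false else true) ∨
    (b = fun _ j => if j = i₀ then false else true) := by
  obtain ⟨R, S, hR, hS, hsum, hfalse, hsub⟩ := key_block b i₀ hb hp
  set Z := Finset.univ.filter (fun p : Fin n × Fin n =>
    (p.1 ≠ p.2 ∨ p = (i₀, i₀)) ∧ b p.1 p.2 = false) with hZ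
  have hZn : Z.card = n := hc
  have hcard := Finset.card_le_card hsub
  rw [Finset.card_product, hZn] at hcard
  have hmul : R.card + S.card ≤ R.card * S.card + 1 := by
    obtain ⟨a, ha⟩ := Nat.exists_eq_add_of_le hR
    obtain ⟨c, hc'⟩ := Nat.exists_eq_add_of_le hS
    rw [ha, hc']
    nlinarith
  have hprodn : R.card * S.card = n := le_antisymm hcard (by omega)
  have heq : R ×ˢ S = Z := Finset.eq_of_subset_of_card_le hsub
    (by rw [Finset.card_product, hZn, hprodn])
  have hsum' : R.card + S.card = n + 1 := by omega
  have hone : R.card = 1 ∨ S.card = 1 := by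
    obtain ⟨a, ha⟩ := Nat.exists_eq_add_of_le hR
    obtain ⟨c, hc'⟩ := Nat.exists_eq_add_of_le hS
    rw [ha, hc'] at hprodn hsum'
    have hac : a * c = 0 := by nlinarith
    rcases Nat.mul_eq_zero.mp hac with h | h <;> omega
  rcases hone with h1 | h1
  · -- R = {i₀}, S = univ : first row zero
    left
    obtain ⟨j₀, hj₀⟩ := Finset.card_eq_one.mp h1
    have hSn : S.card = n := by omega
    have hSu : S = Finset.univ := Finset.eq_univ_of_card S (by simp [hSn])
    have hj0 : j₀ = i₀ := by
      by_contra hne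
      have hmem : b j₀ j₀ = false :=
        hfalse j₀ (by simp [hj₀]) j₀ (by simp [hSu])
      rw [hb j₀ hne] at hmem
      exact Bool.noConfusion hmem
    rw [hj0] at hj₀
    funext i j
    by_cases hi : i = i₀
    · subst hi
      have : b i j = false := hfalse i (by simp [hj₀]) j (by simp [hSu])
      simp [this]
    · simp only [if_neg hi]
      by_contra hcon
      have hbf : b i j = false := by
        cases h : b i j
        · rfl
        · exact absurd h (by simpa [h] using hcon)
      have hij : i ≠ j := by
        intro hd
        subst hd
        rw [hb i hi] at hbf
        exact Bool.noConfusion hbf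
      have : (i, j) ∈ Z := Finset.mem_filter.mpr ⟨Finset.mem_univ _, Or.inl hij, hbf⟩
      rw [← heq, Finset.mem_product, hj₀] at this
      exact hi (Finset.mem_singleton.mp this.1)
  · -- S = {i₀}, R = univ : first column zero
    right
    obtain ⟨j₀, hj₀⟩ := Finset.card_eq_one.mp h1
    have hRn : R.card = n := by omega
    have hRu : R = Finset.univ := Finset.eq_univ_of_card R (by simp [hRn])
    have hj0 : j₀ = i₀ := by
      by_contra hne
      have hmem : b j₀ j₀ = false :=
        hfalse j₀ (by simp [hRu]) j₀ (by simp [hj₀])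
      rw [hb j₀ hne] at hmem
      exact Bool.noConfusion hmem
    rw [hj0] at hj₀
    funext i j
    by_cases hj : j = i₀
    · subst hj
      have : b i j = false := hfalse i (by simp [hRu]) j (by simp [hj₀])
      simp [this]
    · simp only [if_neg hj]
      by_contra hcon
      have hbf : b i j = false := by
        cases h : b i j
        · rfl
        · exact absurd h (by simpa [h] using hcon)
      have hij : i ≠ j := by
        intro hd
        subst hd
        by_cases hii : i = i₀
        · exact hj hii
        · rw [hb i hii] at hbf
          exact Bool.noConfusion hbf
      have : (i, j) ∈ Z := Finset.mem_filter.mpr ⟨Finset.mem_univ _, Or.inl hij, hbf⟩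
      rw [← heq, Finset.mem_product, hj₀] at this
      exact hj (Finset.mem_singleton.mp this.2)

/-- The "first row all zeros" matrix satisfies all three conditions. -/
lemma row_matrix_props {n : ℕ} (hn : 2 ≤ n) (i₀ : Fin n) :
    (∀ i : Fin n, i ≠ i₀ → (fun i _ => if i = i₀ then false else true : Fin n → Fin n → Bool) i i = true) ∧
    (boolToMatrix (fun i _ => if i = i₀ then false else true)).permanent = 0 ∧
    varZerosCount i₀ (fun i _ => if i = i₀ then false else true) = n := by
  refine ⟨fun i hi => by simp [hi], ?_, ?_⟩
  · rw [permanent_boolToMatrix_eq_zero_iff]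
    intro σ
    exact ⟨σ⁻¹ i₀, by simp⟩
  · unfold varZerosCount
    have : (Finset.univ.filter fun p : Fin n × Fin n =>
        (p.1 ≠ p.2 ∨ p = (i₀, i₀)) ∧
          (fun i _ => if i = i₀ then false else true : Fin n → Fin n → Bool) p.1 p.2 = false)
        = {i₀} ×ˢ Finset.univ := by
      ext ⟨i, j⟩
      simp only [Finset.mem_filter, Finset.mem_univ, true_and, Finset.mem_product,
        Finset.mem_singleton, and_true]
      constructor
      · rintro ⟨-, h2⟩
        by_contra hne
        simp [hne] at h2
      · intro hi
        subst hi
        refine ⟨?_, by simp⟩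
        by_cases hj : j = i
        · right; rw [hj]
        · left; exact fun h => hj h.symm
    rw [this, Finset.card_product]
    simp
/-- The "first column all zeros" matrix satisfies all three conditions. -/
lemma col_matrix_props {n : ℕ} (hn : 2 ≤ n) (i₀ : Fin n) :
    (∀ i : Fin n, i ≠ i₀ → (fun _ j => if j = i₀ then false else true : Fin n → Fin n → Bool) i i = true) ∧
    (boolToMatrix (fun _ j => if j = i₀ then false else true)).permanent = 0 ∧
    varZerosCount i₀ (fun _ j => if j = i₀ then false else true) = n := by
  refine ⟨fun i hi => by simp [hi], ?_, ?_⟩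
  · rw [permanent_boolToMatrix_eq_zero_iff]
    intro σ
    exact ⟨i₀, by simp⟩
  · unfold varZerosCount
    have : (Finset.univ.filter fun p : Fin n × Fin n =>
        (p.1 ≠ p.2 ∨ p = (i₀, i₀)) ∧
          (fun _ j => if j = i₀ then false else true : Fin n → Fin n → Bool) p.1 p.2 = false)
        = Finset.univ ×ˢ {i₀} := by
      ext ⟨i, j⟩
      simp only [Finset.mem_filter, Finset.mem_univ, true_and, Finset.mem_product,
        Finset.mem_singleton]
      constructor
      · rintro ⟨-, h2⟩
        by_contra hne
        simp [hne] at h2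
      · intro hj
        subst hj
        refine ⟨?_, by simp⟩
        by_cases hi : i = j
        · right; rw [hi]
        · left; exact hi
    rw [this, Finset.card_product]
    simp

/-- Among binary `n × n` matrices (`n ≥ 2`) of type `B̃ₙ`, i.e. with
diagonal entries at `(i,i)` for `i ≠ 1` all equal to `1`: every such matrix with permanent
`0` has at least `n` variable entries equal to `0`; and exactly `2` such matrices have
permanent `0` and exactly `n` variable entries equal to `0`, namely the one whose first
row is all zeros and the one whose first column is all zeros (all other variable entries
equal to `1`). -/
theorem typeB_binary_permanent_zero_min_zeros_and_count
    (n : ℕ) (hn : 2 ≤ n) :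
    (∀ b : Fin n → Fin n → Bool, (∀ i : Fin n, i ≠ ⟨0, by omega⟩ → b i i = true) →
        (boolToMatrix b).permanent = 0 → n ≤ varZerosCount ⟨0, by omega⟩ b)
    ∧ (Finset.univ.filter fun b : Fin n → Fin n → Bool =>
        (∀ i : Fin n, i ≠ ⟨0, by omega⟩ → b i i = true) ∧
        (boolToMatrix b).permanent = 0 ∧ varZerosCount ⟨0, by omega⟩ b = n).card = 2
    ∧ ∀ b : Fin n → Fin n → Bool, (∀ i : Fin n, i ≠ ⟨0, by omega⟩ → b i i = true) →
        (boolToMatrix b).permanent = 0 → varZerosCount ⟨0, by omega⟩ b = n →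
        (b = fun i _ => if i = (⟨0, by omega⟩ : Fin n) then false else true) ∨
        (b = fun _ j => if j = (⟨0, by omega⟩ : Fin n) then false else true) := by
  set i₀ : Fin n := ⟨0, by omega⟩ with hi₀
  refine ⟨fun b hb hp => min_zeros b i₀ hb hp, ?_, fun b hb hp hc => classify hn b i₀ hb hp hc⟩
  set rowB : Fin n → Fin n → Bool := fun i _ => if i = i₀ then false else true with hrowB
  set colB : Fin n → Fin n → Bool := fun _ j => if j = i₀ then false else true with hcolB
  have hne : rowB ≠ colB := by
    intro h
    have h1 : (1 : ℕ) < n := by omega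
    have hne1 : (⟨1, h1⟩ : Fin n) ≠ i₀ := by
      intro hcon
      have := congrArg Fin.val hcon
      simp [hi₀] at this
    have := congrFun (congrFun h i₀) ⟨1, h1⟩
    simp [hrowB, hcolB, hne1] at this
  have hset : (Finset.univ.filter fun b : Fin n → Fin n → Bool =>
      (∀ i : Fin n, i ≠ i₀ → b i i = true) ∧
      (boolToMatrix b).permanent = 0 ∧ varZerosCount i₀ b = n) = {rowB, colB} := by
    ext b
    simp only [Finset.mem_filter, Finset.mem_univ, true_and, Finset.mem_insert,
      Finset.mem_singleton]
    constructor
    · rintro ⟨h1, h2, h3⟩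
      exact classify hn b i₀ h1 h2 h3
    · rintro (rfl | rfl)
      · exact row_matrix_props hn i₀
      · exact col_matrix_props hn i₀
    
  rw [hset]
  exact Finset.card_pair hne
end
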